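/- arXiv:2212.00696 — 3 statements merged into one kernel-verified Lean document; each statement's English description precedes it below -/
import Mathlib

section
/- With the same ring decomposition as above, Σ_{i,j} |X_{i,j}| · diam(X_{i,j}) ≤ 6 · Σ_{p∈X} d(p,A), since every ring X_{i,j} has diameter at most 2·2^j·R. -/
/-- The ring `X_{i,j}`: points of `X` whose nearest center (given by `c`) is `a`, at
distance in `(2^{j-1} R, 2^j R]` from `a` (distance `≤ R` for `j = 0`). -/
noncomputable def ringSet {Γ : Type*} [MetricSpace Γ] [DecidableEq Γ] (X : Finset Γ) (c : Γ → Γ)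
    (R : ℝ) (a : Γ) (j : ℕ) : Finset Γ :=
  X.filter (fun p => c p = a ∧ dist p a ≤ 2 ^ j * R ∧ (j = 0 ∨ 2 ^ (j - 1) * R < dist p a))

/-!
A ring `X_{a,j}` lies in the closed ball of radius `2^j R` about `a`, so its diameter is at most
`2 · 2^j R`. Each point `p` of the ring pays for this: for `j = 0` it is `2R`, and for `j ≥ 1`
we have `2^{j-1} R < d(p, a) = d(p, A)`, so it is less than `4 d(p, A)`. The rings are disjoint,
hence the total is at most `Σ_p (2R + 4 d(p, A)) = 2R|X| + 4 Σ_p d(p, A)`, and `R |X| ≤ Σ_p d(p, A)`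
because `τ ≥ 1`.
-/

section RingSet

variable {Γ : Type*} [MetricSpace Γ] [DecidableEq Γ] {X : Finset Γ} {c : Γ → Γ} {R : ℝ}
  {a a' p : Γ} {j j' : ℕ}

theorem ringSet_subset : ringSet X c R a j ⊆ X := Finset.filter_subset _ _

theorem apply_eq_of_mem_ringSet (hp : p ∈ ringSet X c R a j) : c p = a :=
  (Finset.mem_filter.mp hp).2.1

theorem coe_ringSet_subset_closedBall :
    (ringSet X c R a j : Set Γ) ⊆ Metric.closedBall a (2 ^ j * R) := fun _ hp =>
  Metric.mem_closedBall.mpr (Finset.mem_filter.mp hp).2.2.1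

theorem diam_ringSet_le (hR : 0 ≤ R) :
    Metric.diam (ringSet X c R a j : Set Γ) ≤ 2 * (2 ^ j * R) :=
  (Metric.diam_mono coe_ringSet_subset_closedBall Metric.isBounded_closedBall).trans
    (Metric.diam_closedBall (by positivity))

theorem le_of_mem_ringSet_of_mem_ringSet (hR : 0 ≤ R) (hp : p ∈ ringSet X c R a j)
    (hp' : p ∈ ringSet X c R a' j') : j' ≤ j := by
  obtain rfl : a = a' := (apply_eq_of_mem_ringSet hp).symm.trans (apply_eq_of_mem_ringSet hp')
  obtain ⟨-, -, hle, -⟩ := Finset.mem_filter.mp hp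
  obtain ⟨-, -, -, hj' | hlt⟩ := Finset.mem_filter.mp hp'
  · omega
  · have : (2 : ℝ) ^ (j' - 1) < 2 ^ j := lt_of_mul_lt_mul_right (hlt.trans_le hle) hR
    have := (pow_lt_pow_iff_right₀ one_lt_two).mp this
    omega

theorem pairwiseDisjoint_ringSet (hR : 0 ≤ R) (s : Set (Γ × ℕ)) :
    s.PairwiseDisjoint fun q => ringSet X c R q.1 q.2 := by
  rintro ⟨a, j⟩ - ⟨a', j'⟩ - hne
  refine Finset.disjoint_left.mpr fun p hp hp' => hne ?_
  have hj := le_antisymm (le_of_mem_ringSet_of_mem_ringSet hR hp' hp)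
    (le_of_mem_ringSet_of_mem_ringSet hR hp hp')
  exact Prod.ext ((apply_eq_of_mem_ringSet hp).symm.trans (apply_eq_of_mem_ringSet hp')) hj

theorem two_mul_pow_mul_le_of_mem_ringSet (hR : 0 ≤ R) (hp : p ∈ ringSet X c R a j) :
    2 * (2 ^ j * R) ≤ 2 * R + 4 * dist p (c p) := by
  obtain ⟨-, rfl, -, hj⟩ := Finset.mem_filter.mp hp
  rcases j with _ | k
  · linarith [dist_nonneg (x := p) (y := c p)]
  · have hlt := hj.resolve_left k.succ_ne_zero
    rw [Nat.add_sub_cancel] at hlt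
    rw [pow_succ]
    linarith

theorem card_mul_diam_ringSet_le (hR : 0 ≤ R) :
    ((ringSet X c R a j).card : ℝ) * Metric.diam (ringSet X c R a j : Set Γ) ≤
      ∑ p ∈ ringSet X c R a j, (2 * R + 4 * dist p (c p)) := by
  calc ((ringSet X c R a j).card : ℝ) * Metric.diam (ringSet X c R a j : Set Γ)
      ≤ (ringSet X c R a j).card • (2 * (2 ^ j * R)) := by
        rw [nsmul_eq_mul]; gcongr; exact diam_ringSet_le hR
    _ ≤ _ := Finset.card_nsmul_le_sum _ _ _ fun _ hp => two_mul_pow_mul_le_of_mem_ringSet hR hp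

theorem sum_sum_sum_ringSet_le (hR : 0 ≤ R) (A : Finset Γ) (J : ℕ) {f : Γ → ℝ}
    (hf : ∀ p ∈ X, 0 ≤ f p) :
    ∑ a ∈ A, ∑ j ∈ Finset.range J, ∑ p ∈ ringSet X c R a j, f p ≤ ∑ p ∈ X, f p := by
  rw [← Finset.sum_product', ← Finset.sum_biUnion (pairwiseDisjoint_ringSet hR _)]
  exact Finset.sum_le_sum_of_subset_of_nonneg
    (Finset.biUnion_subset.mpr fun _ _ => ringSet_subset) fun p hp _ => hf p hp

end RingSet

theorem div_mul_mul_le_self {S τ n : ℝ} (hS : 0 ≤ S) (hτ : 1 ≤ τ) : S / (τ * n) * n ≤ S := by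
  rcases eq_or_ne n 0 with rfl | hn
  · simpa using hS
  · rw [mul_comm τ, ← div_div, div_right_comm, div_mul_cancel₀ _ hn]
    exact div_le_self hS hτ

theorem stmt7_general {Γ : Type*} [MetricSpace Γ] [DecidableEq Γ] (X A : Finset Γ)
    (τ : ℝ) (hτ : 1 ≤ τ) (c : Γ → Γ)
    (hc : ∀ p ∈ X, c p ∈ A ∧ dist p (c p) = Metric.infDist p (A : Set Γ)) (R : ℝ)
    (hR : R = (∑ p ∈ X, Metric.infDist p (A : Set Γ)) / (τ * X.card)) (J : ℕ) :
    ∑ a ∈ A, ∑ j ∈ Finset.range J,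
        ((ringSet X c R a j).card : ℝ) * Metric.diam ((ringSet X c R a j : Set Γ)) ≤
      6 * ∑ p ∈ X, Metric.infDist p (A : Set Γ) := by
  set S := ∑ p ∈ X, Metric.infDist p (A : Set Γ)
  have hS : 0 ≤ S := Finset.sum_nonneg fun _ _ => Metric.infDist_nonneg
  have hR0 : 0 ≤ R := hR ▸ div_nonneg hS (by positivity)
  have hRX : R * X.card ≤ S := hR ▸ div_mul_mul_le_self hS hτ
  calc ∑ a ∈ A, ∑ j ∈ Finset.range J,
        ((ringSet X c R a j).card : ℝ) * Metric.diam ((ringSet X c R a j : Set Γ))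
      ≤ ∑ a ∈ A, ∑ j ∈ Finset.range J, ∑ p ∈ ringSet X c R a j, (2 * R + 4 * dist p (c p)) :=
        Finset.sum_le_sum fun _ _ => Finset.sum_le_sum fun _ _ => card_mul_diam_ringSet_le hR0
    _ ≤ ∑ p ∈ X, (2 * R + 4 * dist p (c p)) :=
        sum_sum_sum_ringSet_le hR0 A J fun _ _ => by positivity
    _ = 2 * (R * X.card) + 4 * S := by
        rw [Finset.sum_add_distrib, Finset.sum_const, nsmul_eq_mul, ← Finset.mul_sum,
          Finset.sum_congr rfl fun p hp => (hc p hp).2]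
        ring
    _ ≤ 6 * S := by linarith

theorem stmt7 {Γ : Type*} [MetricSpace Γ] [DecidableEq Γ] (X A : Finset Γ)
    (hX : X.Nonempty) (hA : A.Nonempty) (τ : ℝ) (hτ : 1 ≤ τ) (c : Γ → Γ)
    (hc : ∀ p ∈ X, c p ∈ A ∧ dist p (c p) = Metric.infDist p (A : Set Γ)) (R : ℝ)
    (hR : R = (∑ p ∈ X, Metric.infDist p (A : Set Γ)) / (τ * X.card)) (J : ℕ) :
    ∑ a ∈ A, ∑ j ∈ Finset.range J,
        ((ringSet X c R a j).card : ℝ) * Metric.diam ((ringSet X c R a j : Set Γ)) ≤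
      6 * ∑ p ∈ X, Metric.infDist p (A : Set Γ) :=
  stmt7_general X A τ hτ c hc R hR J
end

section
/- Let X be a finite set partitioned into groups X_{i,j}, let C be a nonempty finite center set, let Y be the set of the m points of X farthest from C, and let L be the collection of indices (i,j) with |X_{i,j}| ≥ 2m. Then Σ_{(i,j)∈L} |X_{i,j}| · d(X_{i,j},C) ≤ 2 · cost_m(X,C), where cost_m(X,C) is the sum of the |X|−m smallest distances d(p,C) over p ∈ X and d(X_{i,j},C) := min_{p∈X_{i,j}} d(p,C). -/
/-!
In a part `P` with `|P| ≥ 2m`, at most `m` points lie in `Y`, so at least half of `P` lies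
outside `Y`, and each of those points is at distance at least `d(P, C)` from `C`. Hence
`|P| · d(P, C)` is at most twice the total distance of `P \ Y`. These sets are disjoint
subsets of `X \ Y`, and since `Y` consists of the `m` farthest points, the total distance of
`X \ Y` is the sum of the `|X| - m` smallest distances.
-/

/-- Sum of the `j` smallest elements of a finite multiset of reals. -/
noncomputable def sumNSmallest (T : Multiset ℝ) (j : ℕ) : ℝ :=
  ((T.sort (· ≤ ·)).take j).sum

/-- Sum of the `|X| - m` smallest distances of points of `X` to the center set `C`. -/
noncomputable def costm {Γ : Type*} [MetricSpace Γ] (m : ℕ) (X : Finset Γ) (C : Set Γ) : ℝ :=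
  sumNSmallest (X.val.map fun p => Metric.infDist p C) (X.card - m)

namespace Multiset

lemma sum_le_sum_of_card_eq_of_forall_le {E D : Multiset ℝ} (hcard : card E = card D)
    (hle : ∀ e ∈ E, ∀ d ∈ D, e ≤ d) : E.sum ≤ D.sum := by
  rcases eq_or_ne E 0 with rfl | hE
  · simp [card_eq_zero.mp hcard.symm]
  obtain ⟨t, ht, ht_max⟩ := exists_max_image id hE
  calc E.sum ≤ card E • t := sum_le_card_nsmul E t ht_max
    _ = card D • t := by rw [hcard]
    _ ≤ D.sum := card_nsmul_le_sum fun d hd => hle t ht d hd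

/-- Exchange argument: the elements of `S` outside `A` come from `B`, hence are at least as
large as the equally many elements of `A` outside `S`. -/
lemma sum_le_sum_of_le_add {A B S : Multiset ℝ} (hS : S ≤ A + B) (hcard : card S = card A)
    (hAB : ∀ a ∈ A, ∀ b ∈ B, a ≤ b) : A.sum ≤ S.sum := by
  have hSA := sub_add_inter S A
  have hAS := sub_add_inter A S
  rw [inter_comm] at hSA
  have hSA_le : S - A ≤ B := Multiset.sub_le_iff_le_add'.mpr hS
  have hcard' : card (A - S) = card (S - A) := by
    have h1 := congrArg card hSA
    have h2 := congrArg card hAS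
    simp only [card_add] at h1 h2
    omega
  have hsum : (A - S).sum ≤ (S - A).sum :=
    sum_le_sum_of_card_eq_of_forall_le hcard' fun a ha b hb =>
      hAB a (mem_of_le tsub_le_self ha) b (mem_of_le hSA_le hb)
  calc A.sum = (A - S).sum + (A ∩ S).sum := by rw [← sum_add, hAS]
    _ ≤ (S - A).sum + (A ∩ S).sum := by gcongr
    _ = S.sum := by rw [← sum_add, hSA]

lemma sum_le_sumNSmallest {A B : Multiset ℝ} (hAB : ∀ a ∈ A, ∀ b ∈ B, a ≤ b) :
    A.sum ≤ sumNSmallest (A + B) (card A) := by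
  have hle : (((A + B).sort (· ≤ ·)).take (card A) : Multiset ℝ) ≤ A + B := by
    calc _ ≤ (((A + B).sort (· ≤ ·) : List ℝ) : Multiset ℝ) :=
          (List.take_sublist _ _).subperm
      _ = A + B := sort_eq _ _
  have hcard : card (((A + B).sort (· ≤ ·)).take (card A) : Multiset ℝ) = card A := by
    simp
  exact sum_le_sum_of_le_add hle hcard hAB

end Multiset

namespace Finset

variable {α ι : Type*}

lemma sum_sdiff_le_sumNSmallest [DecidableEq α] {X Y : Finset α} (f : α → ℝ) (hYX : Y ⊆ X)
    (hfar : ∀ y ∈ Y, ∀ x ∈ X \ Y, f x ≤ f y) :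
    ∑ x ∈ X \ Y, f x ≤ sumNSmallest (X.val.map f) (#X - #Y) := by
  have hval : X.val = (X \ Y).val + Y.val := by
    rw [sdiff_val, tsub_add_cancel_of_le (val_le_iff.mpr hYX)]
  have hcard : #X - #Y = Multiset.card ((X \ Y).val.map f) := by
    rw [Multiset.card_map, ← card_def, card_sdiff_of_subset hYX]
  rw [hval, Multiset.map_add, hcard]
  refine Multiset.sum_le_sumNSmallest ?_
  simp only [Multiset.mem_map, mem_val]
  rintro _ ⟨x, hx, rfl⟩ _ ⟨y, hy, rfl⟩
  exact hfar y hy x hx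

lemma card_mul_sInf_image_le_two_mul_sum_sdiff [DecidableEq α] {P Y : Finset α} {f : α → ℝ}
    (hf : ∀ p ∈ P, 0 ≤ f p) (hY : 2 * #(P ∩ Y) ≤ #P) :
    #P * sInf (f '' P) ≤ 2 * ∑ p ∈ P \ Y, f p := by
  have hinf_nonneg : 0 ≤ sInf (f '' P) := Real.sInf_nonneg (by rintro _ ⟨p, hp, rfl⟩; exact hf p hp)
  have hinf_le : ∀ p ∈ P \ Y, sInf (f '' P) ≤ f p := fun p hp =>
    csInf_le (P.finite_toSet.image f).bddBelow ⟨p, (mem_sdiff.mp hp).1, rfl⟩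
  have hcard : (#P : ℝ) ≤ 2 * #(P \ Y) := by
    have := card_sdiff_add_card_inter P Y
    exact_mod_cast (by omega : #P ≤ 2 * #(P \ Y))
  calc #P * sInf (f '' P) ≤ 2 * (#(P \ Y) * sInf (f '' P)) := by
        rw [← mul_assoc]; exact mul_le_mul_of_nonneg_right hcard hinf_nonneg
    _ ≤ 2 * ∑ p ∈ P \ Y, f p := by
        gcongr
        simpa using card_nsmul_le_sum (P \ Y) f _ hinf_le

lemma sum_sum_le_sum_of_pairwiseDisjoint [DecidableEq α] {s : Finset ι} {t : ι → Finset α}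
    {u : Finset α} {f : α → ℝ} (hdisj : (s : Set ι).PairwiseDisjoint t)
    (hsub : ∀ i ∈ s, t i ⊆ u) (hf : ∀ a ∈ u, 0 ≤ f a) :
    ∑ i ∈ s, ∑ a ∈ t i, f a ≤ ∑ a ∈ u, f a := by
  rw [← sum_biUnion hdisj]
  exact sum_le_sum_of_subset_of_nonneg (biUnion_subset.mpr hsub) fun a ha _ => hf a ha

end Finset

open Finset in
theorem stmt8_general {Γ : Type*} {ι : Type*} [MetricSpace Γ] [DecidableEq Γ]
    (X : Finset Γ) (C : Finset Γ) (m : ℕ)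
    (I : Finset ι) (parts : ι → Finset Γ)
    (hdisj : ∀ i ∈ I, ∀ j ∈ I, i ≠ j → Disjoint (parts i) (parts j))
    (hcover : X = I.biUnion parts)
    (Y : Finset Γ) (hYX : Y ⊆ X) (hYcard : Y.card = m)
    (hfar : ∀ y ∈ Y, ∀ x ∈ X \ Y,
      Metric.infDist x (C : Set Γ) ≤ Metric.infDist y (C : Set Γ)) :
    ∑ i ∈ I.filter (fun i => 2 * m ≤ (parts i).card),
        ((parts i).card : ℝ) * sInf ((fun p => Metric.infDist p (C : Set Γ)) '' (parts i)) ≤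
      2 * costm m X (C : Set Γ) := by
  set f : Γ → ℝ := fun p => Metric.infDist p (C : Set Γ)
  have hf : ∀ p, 0 ≤ f p := fun _ => Metric.infDist_nonneg
  set L := I.filter (fun i => 2 * m ≤ #(parts i))
  have hL : L ⊆ I := filter_subset _ _
  calc ∑ i ∈ L, (#(parts i) : ℝ) * sInf (f '' parts i)
      ≤ ∑ i ∈ L, 2 * ∑ p ∈ parts i \ Y, f p := by
        refine sum_le_sum fun i hi => card_mul_sInf_image_le_two_mul_sum_sdiff (fun p _ => hf p) ?_
        calc 2 * #(parts i ∩ Y) ≤ 2 * #Y := by gcongr; exact inter_subset_right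
          _ ≤ #(parts i) := hYcard ▸ (mem_filter.mp hi).2
    _ = 2 * ∑ i ∈ L, ∑ p ∈ parts i \ Y, f p := by rw [mul_sum]
    _ ≤ 2 * ∑ p ∈ X \ Y, f p := by
        gcongr
        refine sum_sum_le_sum_of_pairwiseDisjoint ?_ ?_ fun p _ => hf p
        · exact fun i hi j hj hij =>
            (hdisj i (hL hi) j (hL hj) hij).mono sdiff_subset sdiff_subset
        · exact fun i hi => sdiff_subset_sdiff (hcover ▸ subset_biUnion_of_mem parts (hL hi)) le_rfl
    _ ≤ 2 * costm m X (C : Set Γ) := by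
        gcongr
        simpa only [costm, hYcard] using sum_sdiff_le_sumNSmallest f hYX hfar

theorem stmt8 {Γ : Type*} {ι : Type*} [MetricSpace Γ] [DecidableEq Γ]
    (X : Finset Γ) (C : Finset Γ) (hC : C.Nonempty) (m : ℕ) (hm : m ≤ X.card)
    (I : Finset ι) (parts : ι → Finset Γ)
    (hdisj : ∀ i ∈ I, ∀ j ∈ I, i ≠ j → Disjoint (parts i) (parts j))
    (hcover : X = I.biUnion parts)
    (Y : Finset Γ) (hYX : Y ⊆ X) (hYcard : Y.card = m)
    (hfar : ∀ y ∈ Y, ∀ x ∈ X \ Y,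
      Metric.infDist x (C : Set Γ) ≤ Metric.infDist y (C : Set Γ)) :
    ∑ i ∈ I.filter (fun i => 2 * m ≤ (parts i).card),
        ((parts i).card : ℝ) * sInf ((fun p => Metric.infDist p (C : Set Γ)) '' (parts i)) ≤
      2 * costm m X (C : Set Γ) :=
  stmt8_general X C m I parts hdisj hcover Y hYX hYcard hfar
end

section
/- Let X be a finite set partitioned into disjoint groups X_1, …, X_r, let C be a nonempty finite center set, and 0 ≤ m ≤ |X|. Then cost_m(X, C) = min over nonnegative integers m_1, …, m_r with Σ_i m_i = m and m_i ≤ |X_i| of Σ_i cost_{m_i}(X_i, C), where cost_t(S,C) denotes the sum of the |S|−t smallest values of d(p,C) over p ∈ S. -/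
open Finset

theorem List.sum_take_le_sum_take_of_sublist {α : Type*} [AddCommMonoid α] [LinearOrder α]
    [IsOrderedAddMonoid α] {s t : List α} (hst : s.Sublist t) (ht : t.Pairwise (· ≤ ·)) :
    ∀ n ≤ s.length, (t.take n).sum ≤ (s.take n).sum := by
  induction hst with
  | slnil => simp
  | @cons l₁ l₂ a hsub ih =>
    intro n hn
    rcases n with _ | n
    · simp
    have hlt : n < l₂.length := lt_of_lt_of_le hn (by simpa using hsub.length_le)
    have ha : a ≤ l₂[n] := List.rel_of_pairwise_cons ht (List.getElem_mem hlt)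
    calc ((a :: l₂).take (n + 1)).sum = a + (l₂.take n).sum := by simp
      _ ≤ (l₂.take n).sum + l₂[n] := by rw [add_comm]; gcongr
      _ = (l₂.take (n + 1)).sum := (List.sum_take_succ l₂ n hlt).symm
      _ ≤ (l₁.take (n + 1)).sum := ih ht.of_cons (n + 1) hn
  | @cons_cons l₁ l₂ a _ ih =>
    intro n hn
    rcases n with _ | n
    · simp
    simpa using add_le_add_right (ih ht.of_cons n (by simpa using hn)) a

theorem sumNSmallest_card_le_sum {S T : Multiset ℝ} (h : S ≤ T) :
    sumNSmallest T (Multiset.card S) ≤ S.sum := by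
  have hsub : (S.sort (· ≤ ·)).Sublist (T.sort (· ≤ ·)) := by
    refine List.sublist_of_subperm_of_pairwise (Multiset.coe_le.mp ?_)
      (Multiset.pairwise_sort _ _) (Multiset.pairwise_sort _ _)
    simpa only [Multiset.sort_eq] using h
  have key := List.sum_take_le_sum_take_of_sublist hsub (Multiset.pairwise_sort _ _) _ le_rfl
  rw [List.take_length, Multiset.length_sort] at key
  rwa [← Multiset.sum_coe (S.sort _), Multiset.sort_eq] at key

theorem exists_le_card_eq_sum_eq_sumNSmallest {T : Multiset ℝ} {j : ℕ}
    (hj : j ≤ Multiset.card T) :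
    ∃ S ≤ T, Multiset.card S = j ∧ S.sum = sumNSmallest T j := by
  refine ⟨((T.sort (· ≤ ·)).take j : List ℝ), ?_, by simpa using hj, rfl⟩
  conv_rhs => rw [← Multiset.sort_eq T (· ≤ ·)]
  exact Multiset.coe_le.mpr (List.take_sublist _ _).subperm

theorem Multiset.exists_le_map_eq_of_le_map {α β : Type*} [DecidableEq β] (g : α → β)
    {S : Multiset β} {s : Multiset α} (h : S ≤ s.map g) : ∃ t ≤ s, t.map g = S := by
  induction s using Multiset.induction generalizing S with
  | empty => exact ⟨0, le_rfl, by simpa using (Multiset.le_zero.1 h).symm⟩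
  | cons a s ih =>
    rw [Multiset.map_cons] at h
    by_cases ha : g a ∈ S
    · obtain ⟨t, hts, ht⟩ := ih (Multiset.erase_le_iff_le_cons.2 h)
      refine ⟨a ::ₘ t, Multiset.cons_le_cons a hts, ?_⟩
      rw [Multiset.map_cons, ht, Multiset.cons_erase ha]
    · obtain ⟨t, hts, rfl⟩ := ih ((Multiset.le_cons_of_notMem ha).1 h)
      exact ⟨t, hts.trans (Multiset.le_cons_self _ _), rfl⟩

section
variable {α : Type*} (g : α → ℝ)

theorem sumNSmallest_map_le_sum_of_subset {s t : Finset α} (h : t ⊆ s) :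
    sumNSmallest (s.val.map g) #t ≤ ∑ x ∈ t, g x := by
  simpa using sumNSmallest_card_le_sum (Multiset.map_le_map (f := g) (val_le_iff.2 h))

theorem exists_subset_card_eq_sum_eq_sumNSmallest {s : Finset α} {j : ℕ} (hj : j ≤ #s) :
    ∃ t ⊆ s, #t = j ∧ ∑ x ∈ t, g x = sumNSmallest (s.val.map g) j := by
  classical
  obtain ⟨S, hS, hcard, hsum⟩ :=
    exists_le_card_eq_sum_eq_sumNSmallest (T := s.val.map g) (by simpa using hj)
  obtain ⟨u, hu, rfl⟩ := Multiset.exists_le_map_eq_of_le_map g hS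
  exact ⟨⟨u, Multiset.nodup_of_le hu s.nodup⟩, val_le_iff.1 hu, by simpa using hcard, hsum⟩

variable [DecidableEq α] {ι : Type*} (I : Finset ι) {parts : ι → Finset α}

theorem sumNSmallest_biUnion_le (hdisj : (I : Set ι).PairwiseDisjoint parts) {k : ι → ℕ}
    (hk : ∀ i ∈ I, k i ≤ #(parts i)) :
    sumNSmallest ((I.biUnion parts).val.map g) (∑ i ∈ I, k i) ≤
      ∑ i ∈ I, sumNSmallest ((parts i).val.map g) (k i) := by
  choose! t hts hcard hsum using
    fun i (hi : i ∈ I) => exists_subset_card_eq_sum_eq_sumNSmallest g (hk i hi)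
  have htdisj : (I : Set ι).PairwiseDisjoint t := hdisj.mono_on hts
  calc sumNSmallest ((I.biUnion parts).val.map g) (∑ i ∈ I, k i)
      = sumNSmallest ((I.biUnion parts).val.map g) #(I.biUnion t) := by
        rw [card_biUnion htdisj, sum_congr rfl hcard]
    _ ≤ ∑ x ∈ I.biUnion t, g x := sumNSmallest_map_le_sum_of_subset g (biUnion_mono hts)
    _ = ∑ i ∈ I, ∑ x ∈ t i, g x := sum_biUnion htdisj
    _ = ∑ i ∈ I, sumNSmallest ((parts i).val.map g) (k i) := sum_congr rfl hsum

theorem exists_sum_sumNSmallest_eq_sumNSmallest_biUnion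
    (hdisj : (I : Set ι).PairwiseDisjoint parts) {j : ℕ} (hj : j ≤ #(I.biUnion parts)) :
    ∃ k : ι → ℕ, (∀ i ∈ I, k i ≤ #(parts i)) ∧ ∑ i ∈ I, k i = j ∧
      ∑ i ∈ I, sumNSmallest ((parts i).val.map g) (k i) =
        sumNSmallest ((I.biUnion parts).val.map g) j := by
  obtain ⟨t, hts, rfl, hsum⟩ := exists_subset_card_eq_sum_eq_sumNSmallest g hj
  have ht : I.biUnion (fun i => t ∩ parts i) = t := by rw [← inter_biUnion, inter_eq_left.2 hts]
  have htdisj : (I : Set ι).PairwiseDisjoint (fun i => t ∩ parts i) :=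
    hdisj.mono_on fun _ _ => inter_subset_right
  have hk : ∀ i ∈ I, #(t ∩ parts i) ≤ #(parts i) := fun _ _ => card_le_card inter_subset_right
  have hksum : ∑ i ∈ I, #(t ∩ parts i) = #t := by rw [← card_biUnion htdisj, ht]
  refine ⟨fun i => #(t ∩ parts i), hk, hksum, le_antisymm ?_ ?_⟩
  · calc ∑ i ∈ I, sumNSmallest ((parts i).val.map g) #(t ∩ parts i)
        ≤ ∑ i ∈ I, ∑ x ∈ t ∩ parts i, g x :=
          sum_le_sum fun _ _ => sumNSmallest_map_le_sum_of_subset g inter_subset_right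
      _ = ∑ x ∈ t, g x := by rw [← sum_biUnion htdisj, ht]
      _ = _ := hsum
  · simpa only [hksum] using sumNSmallest_biUnion_le g I hdisj hk

end

theorem stmt12_general {Γ : Type*} {ι : Type*} [MetricSpace Γ] [DecidableEq Γ]
    (X : Finset Γ) (C : Finset Γ) (m : ℕ) (hm : m ≤ X.card)
    (I : Finset ι) (parts : ι → Finset Γ)
    (hdisj : ∀ i ∈ I, ∀ j ∈ I, i ≠ j → Disjoint (parts i) (parts j))
    (hcover : X = I.biUnion parts) :
    (∃ f : ι → ℕ, (∑ i ∈ I, f i) = m ∧ (∀ i ∈ I, f i ≤ (parts i).card) ∧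
      ∑ i ∈ I, costm (f i) (parts i) (C : Set Γ) = costm m X (C : Set Γ)) ∧
    (∀ f : ι → ℕ, (∑ i ∈ I, f i) = m → (∀ i ∈ I, f i ≤ (parts i).card) →
      costm m X (C : Set Γ) ≤ ∑ i ∈ I, costm (f i) (parts i) (C : Set Γ)) := by
  subst hcover
  set g : Γ → ℝ := fun p => Metric.infDist p (C : Set Γ)
  have hpairwise : (I : Set ι).PairwiseDisjoint parts := fun i hi j hj hij => hdisj i hi j hj hij
  have hcard : #(I.biUnion parts) = ∑ i ∈ I, #(parts i) := card_biUnion hpairwise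
  refine ⟨?_, fun f hf hfle => ?_⟩
  · obtain ⟨k, hk, hksum, hcost⟩ :=
      exists_sum_sumNSmallest_eq_sumNSmallest_biUnion g I hpairwise (Nat.sub_le _ m)
    refine ⟨fun i => #(parts i) - k i, ?_, fun _ _ => Nat.sub_le _ _, ?_⟩
    · rw [sum_tsub_distrib I hk, ← hcard, hksum]
      omega
    · calc ∑ i ∈ I, costm (#(parts i) - k i) (parts i) C
          = ∑ i ∈ I, sumNSmallest ((parts i).val.map g) (k i) :=
            sum_congr rfl fun i hi => by rw [costm, Nat.sub_sub_self (hk i hi)]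
        _ = costm m (I.biUnion parts) C := hcost
  · have hkept : #(I.biUnion parts) - m = ∑ i ∈ I, (#(parts i) - f i) := by
      rw [sum_tsub_distrib I hfle, ← hcard, hf]
    rw [costm, hkept]
    exact sumNSmallest_biUnion_le g I hpairwise fun _ _ => Nat.sub_le _ _

theorem stmt12 {Γ : Type*} {ι : Type*} [MetricSpace Γ] [DecidableEq Γ]
    (X : Finset Γ) (C : Finset Γ) (hC : C.Nonempty) (m : ℕ) (hm : m ≤ X.card)
    (I : Finset ι) (parts : ι → Finset Γ)
    (hdisj : ∀ i ∈ I, ∀ j ∈ I, i ≠ j → Disjoint (parts i) (parts j))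
    (hcover : X = I.biUnion parts) :
    (∃ f : ι → ℕ, (∑ i ∈ I, f i) = m ∧ (∀ i ∈ I, f i ≤ (parts i).card) ∧
      ∑ i ∈ I, costm (f i) (parts i) (C : Set Γ) = costm m X (C : Set Γ)) ∧
    (∀ f : ι → ℕ, (∑ i ∈ I, f i) = m → (∀ i ∈ I, f i ≤ (parts i).card) →
      costm m X (C : Set Γ) ≤ ∑ i ∈ I, costm (f i) (parts i) (C : Set Γ)) :=
  stmt12_general X C m hm I parts hdisj hcover
end
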